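/- arXiv:1202.0141 — 2 statements merged into one kernel-verified Lean document; each statement's English description precedes it below -/
import Mathlib

section
/- For every n ≥ 1, a function x : S^n → ℝ lies in the Bell cone B_n if and only if the function s ↦ ∑_{t∈S^n} (∏_{j=1}^n F_{s_j t_j}) x^t lies in the dual cone (NS_n)* of the no-signaling cone. -/
open Finset

noncomputable section

/-- The dual cone of a set of real-valued functions on a finite index set. -/
def dualCone {I : Type*} [Fintype I] (C : Set (I → ℝ)) : Set (I → ℝ) :=
  {g | ∀ x ∈ C, 0 ≤ ∑ i, g i * x i}

/-- The convex cone generated by a set: all finite nonnegative linear combinations. -/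
def coneHull {E : Type*} [AddCommMonoid E] [Module ℝ E] (X : Set E) : Set E :=
  {y | ∃ (m : ℕ) (c : Fin m → ℝ) (v : Fin m → E),
    (∀ i, 0 ≤ c i) ∧ (∀ i, v i ∈ X) ∧ y = ∑ i, c i • v i}

/-- The square cone `Sq ⊆ ℝ^S`, where `S = {-1,0,+1}` is `SignType`. -/
def Sq : Set (SignType → ℝ) :=
  {x | -x 0 ≤ x (-1) ∧ x (-1) ≤ x 0 ∧ -x 0 ≤ x 1 ∧ x 1 ≤ x 0}

/-- `hF v t s = h_v(t,s)`: equals `t` if `v = s`, `1` if `v = 0`, and `0` if `v = -s`. -/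
def hF (v t s : SignType) : ℝ := if v = s then (t : ℝ) else if v = 0 then 1 else 0

/-- The no-signaling cone `NS_n`. -/
def NS (n : ℕ) : Set ((Fin n → SignType) → ℝ) :=
  {x | ∀ s t : Fin n → SignType, (∀ j, s j ≠ 0) → (∀ j, t j ≠ 0) →
    0 ≤ ∑ v : Fin n → SignType, (∏ j, hF (v j) (t j) (s j)) * x v}

/-- Local deterministic strategies: `a j 0 = 1` and `a j (±1) ∈ {-1,+1}`. -/
def IsDet {n : ℕ} (a : Fin n → SignType → ℝ) : Prop :=
  ∀ j, a j 0 = 1 ∧ (a j (-1) = -1 ∨ a j (-1) = 1) ∧ (a j 1 = -1 ∨ a j 1 = 1)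

/-- The Bell cone `B_n`: the convex cone generated by the local deterministic points. -/
def Bell (n : ℕ) : Set ((Fin n → SignType) → ℝ) :=
  coneHull {x | ∃ a : Fin n → SignType → ℝ, IsDet a ∧ x = fun s => ∏ j, a j (s j)}

/-- The tensor `F_{st}` (lowered indices). -/
def Flo (s t : SignType) : ℝ :=
  if s = 0 then (if t = 0 then 1 else 0)
  else if t = 0 then 0
  else if s = 1 ∧ t = 1 then -(1/2) else 1/2

/-- The tensor `F^{st}` (raised indices). -/
def Fup (s t : SignType) : ℝ :=
  if s = 0 then (if t = 0 then 1 else 0)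
  else if t = 0 then 0
  else if s = 1 ∧ t = 1 then -1 else 1

/-!
The lowering map `x ↦ F x` is the `n`-fold Kronecker power of the invertible `3 × 3` matrix
`F_{st}` (its inverse is `F^{st}`). On one site it maps the four deterministic strategies
bijectively onto the four vectors `v ↦ h_v(t,s)`, `s,t = ±1`, so it maps the generators of `B_n`
bijectively onto the product vectors `v ↦ ∏ h_{v_j}(t_j,s_j)`, and `B_n` onto the cone `G` they
generate. By definition `NS_n` is the dual of this finite set, so `(NS_n)*` is its bidual, which
is `G` by Farkas' lemma: `G` is closed since all its generators take the value `1` at `v = 0`.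
-/

section ConeHull

variable {E F : Type*} [AddCommGroup E] [Module ℝ E] [AddCommGroup F] [Module ℝ F]

theorem coneHull_eq_hull (X : Set E) : coneHull X = PointedCone.hull ℝ X := by
  ext y
  rw [SetLike.mem_coe, Submodule.mem_span_set']
  constructor
  · rintro ⟨m, c, v, hc, hv, rfl⟩
    exact ⟨m, fun i => ⟨c i, hc i⟩, fun i => ⟨v i, hv i⟩, rfl⟩
  · rintro ⟨m, c, v, rfl⟩
    exact ⟨m, fun i => c i, fun i => v i, fun i => (c i).2, fun i => (v i).2, rfl⟩

theorem coneHull_image (f : E →ₗ[ℝ] F) (X : Set E) :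
    coneHull (f '' X) = f '' coneHull X := by
  rw [coneHull_eq_hull, coneHull_eq_hull]
  exact congrArg SetLike.coe (Submodule.span_image (f.restrictScalars {c : ℝ // 0 ≤ c}))

-- Normalising by `φ`, every nonzero point of the cone is a nonnegative multiple of a point of
-- the convex hull; this is what makes a finitely generated cone closed.
theorem hull_eq_of_forall_eq_one (X : Set E) (φ : E →ₗ[ℝ] ℝ) (hφ : ∀ g ∈ X, φ g = 1) :
    (PointedCone.hull ℝ X : Set E) =
      {0} ∪ Prod.fst '' {p : E × convexHull ℝ X | 0 ≤ φ p.1 ∧ p.1 = φ p.1 • (p.2 : E)} := by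
  ext y
  constructor
  · rw [← coneHull_eq_hull]
    rintro ⟨m, c, v, hc, hv, rfl⟩
    have hφy : φ (∑ i, c i • v i) = ∑ i, c i := by simp [map_sum, hφ _ (hv _)]
    rcases (Finset.sum_nonneg fun i _ => hc i).eq_or_lt with hr | hr
    · left
      have hc0 := (Finset.sum_eq_zero_iff_of_nonneg (s := Finset.univ) fun i _ => hc i).1 hr.symm
      exact Finset.sum_eq_zero fun i hi => by rw [hc0 i hi, zero_smul]
    · right
      refine ⟨(∑ i, c i • v i, ⟨Finset.univ.centerMass c v,
        Finset.centerMass_mem_convexHull _ (fun i _ => hc i) hr fun i _ => hv i⟩), ⟨?_, ?_⟩, rfl⟩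
      · exact hφy ▸ hr.le
      · simp only [hφy, Finset.centerMass, smul_inv_smul₀ hr.ne']
  · rintro (h0 | ⟨⟨y, z, hz⟩, ⟨hy0, hyz⟩, rfl⟩)
    · rw [Set.mem_singleton_iff.1 h0]; exact zero_mem _
    · have hz' : z ∈ PointedCone.hull ℝ X :=
        convexHull_min PointedCone.subset_hull (PointedCone.hull ℝ X).convex hz
      rw [hyz]
      exact Submodule.smul_mem _ ⟨φ y, hy0⟩ hz'

end ConeHull

section Closed

variable {E : Type*} [AddCommGroup E] [Module ℝ E] [TopologicalSpace E]
  [IsTopologicalAddGroup E] [ContinuousSMul ℝ E] [T2Space E]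

theorem isClosed_hull_of_forall_eq_one {X : Set E} (hX : X.Finite) (φ : E →L[ℝ] ℝ)
    (hφ : ∀ g ∈ X, φ g = 1) : IsClosed (PointedCone.hull ℝ X : Set E) := by
  rw [hull_eq_of_forall_eq_one X φ hφ]
  have : CompactSpace (convexHull ℝ X) :=
    isCompact_iff_compactSpace.1 (hX.isCompact_convexHull (𝕜 := ℝ))
  refine isClosed_singleton.union (isClosedMap_fst_of_compactSpace _ ?_)
  exact (isClosed_le continuous_const (φ.continuous.comp continuous_fst)).inter
    (isClosed_eq continuous_fst
      ((φ.continuous.comp continuous_fst).smul (continuous_subtype_val.comp continuous_snd)))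

end Closed

section Farkas

variable {ι : Type*} [Fintype ι]

theorem coneHull_subset_dualCone_dualCone (X : Set (ι → ℝ)) :
    coneHull X ⊆ dualCone (dualCone X) := by
  rintro y ⟨m, c, v, hc, hv, rfl⟩ x hx
  have hsum : ∑ i, (∑ k, c k • v k) i * x i = ∑ k, c k * ∑ i, v k i * x i := by
    simp only [Finset.sum_apply, Pi.smul_apply, smul_eq_mul, Finset.sum_mul, Finset.mul_sum]
    rw [Finset.sum_comm]
    simp only [mul_assoc]
  rw [hsum]
  exact Finset.sum_nonneg fun k _ => mul_nonneg (hc k) (by simpa only [mul_comm] using hx _ (hv k))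

theorem dualCone_dualCone_subset_coneHull {X : Set (ι → ℝ)} (hX : X.Finite)
    (φ : (ι → ℝ) →L[ℝ] ℝ) (hφ : ∀ g ∈ X, φ g = 1) :
    dualCone (dualCone X) ⊆ coneHull X := by
  classical
  intro y hy
  by_contra hyX
  let C : ProperCone ℝ (ι → ℝ) := ⟨PointedCone.hull ℝ X, isClosed_hull_of_forall_eq_one hX φ hφ⟩
  obtain ⟨f, hfC, hfy⟩ := C.hyperplane_separation_point (x₀ := y) (by
    rwa [coneHull_eq_hull] at hyX)
  set x : ι → ℝ := fun i => f (Pi.single i 1)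
  have hf : ∀ g, f g = ∑ i, x i * g i := fun g => by
    conv_lhs => rw [← Finset.univ_sum_single g, map_sum]
    refine Finset.sum_congr rfl fun i _ => ?_
    rw [mul_comm, ← smul_eq_mul, ← map_smul, ← Pi.single_smul', smul_eq_mul, mul_one]
  have hx : x ∈ dualCone X := fun g hg => by
    rw [← hf]; exact hfC g (PointedCone.subset_hull hg)
  have hfy' : 0 ≤ f y := by simpa only [hf, mul_comm] using hy x hx
  exact hfy'.not_gt hfy

theorem dualCone_dualCone_eq_coneHull {X : Set (ι → ℝ)} (hX : X.Finite)
    (φ : (ι → ℝ) →L[ℝ] ℝ) (hφ : ∀ g ∈ X, φ g = 1) :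
    dualCone (dualCone X) = coneHull X :=
  (dualCone_dualCone_subset_coneHull hX φ hφ).antisymm (coneHull_subset_dualCone_dualCone X)

end Farkas

open Matrix

section KroneckerPi

variable {ι α β γ R : Type*} [Fintype ι] [CommSemiring R]

def piTensor (w : ι → α → R) : (ι → α) → R := fun v => ∏ j, w j (v j)

variable (ι) in
def Matrix.kroneckerPi (A : Matrix α β R) : Matrix (ι → α) (ι → β) R :=
  Matrix.of fun s t => ∏ j, A (s j) (t j)

theorem Matrix.kroneckerPi_mulVec_piTensor [DecidableEq ι] [Fintype β] (A : Matrix α β R)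
    (w : ι → β → R) :
    kroneckerPi ι A *ᵥ piTensor w = piTensor fun j => A *ᵥ w j := by
  funext s
  simp only [mulVec, dotProduct, kroneckerPi, of_apply, piTensor, Fintype.prod_sum,
    ← Finset.prod_mul_distrib]

theorem Matrix.kroneckerPi_mul [DecidableEq ι] [Fintype β] (A : Matrix α β R) (B : Matrix β γ R) :
    kroneckerPi ι (A * B) = kroneckerPi ι A * kroneckerPi ι B := by
  ext s t
  simp only [mul_apply, kroneckerPi, of_apply, Fintype.prod_sum, ← Finset.prod_mul_distrib]

theorem Matrix.kroneckerPi_one [DecidableEq α] : kroneckerPi ι (1 : Matrix α α R) = 1 := by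
  ext s t
  simp only [kroneckerPi, of_apply, one_apply, Finset.prod_boole, Finset.mem_univ, true_implies,
    funext_iff]

theorem Matrix.image_mulVec_kroneckerPi [DecidableEq ι] [Fintype β] (A : Matrix α β R)
    {P : Set (β → R)} {Q : Set (α → R)} (h : (A *ᵥ ·) '' P = Q) :
    (kroneckerPi ι A *ᵥ ·) '' (piTensor '' Set.univ.pi fun _ => P) =
      piTensor '' Set.univ.pi fun _ => Q := by
  rw [Set.image_image]
  simp_rw [kroneckerPi_mulVec_piTensor]
  change (piTensor ∘ Pi.map fun _ => (A *ᵥ ·)) '' _ = _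
  rw [Set.image_comp, Set.piMap_image_univ_pi, h]

end KroneckerPi

theorem sum_signType {M : Type*} [AddCommMonoid M] (f : SignType → M) :
    ∑ u, f u = f 0 + f (-1) + f 1 := by
  simp [SignType.univ_eq, add_assoc]

theorem fup_mul_flo : Matrix.of Fup * Matrix.of Flo = 1 := by
  ext s t
  cases s <;> cases t <;> simp [mul_apply, sum_signType, Fup, Flo] <;> norm_num

def detSite : Set (SignType → ℝ) :=
  {a | a 0 = 1 ∧ (a (-1) = -1 ∨ a (-1) = 1) ∧ (a 1 = -1 ∨ a 1 = 1)}

def nsSite : Set (SignType → ℝ) :=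
  {w | ∃ s t : SignType, s ≠ 0 ∧ t ≠ 0 ∧ w = fun v => hF v t s}

theorem image_mulVec_flo_detSite : (Matrix.of Flo *ᵥ ·) '' detSite = nsSite := by
  ext w
  constructor
  -- `t = a (-1)`, and `s = -1` or `s = 1` according as `a 1 = a (-1)` or not
  · rintro ⟨a, ⟨h0, hneg | hneg, hpos | hpos⟩, rfl⟩ <;>
      [refine ⟨-1, -1, ?_⟩; refine ⟨1, -1, ?_⟩; refine ⟨1, 1, ?_⟩; refine ⟨-1, 1, ?_⟩] <;>
      refine ⟨by decide, by decide, funext fun v => ?_⟩ <;>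
      cases v <;> simp [mulVec, dotProduct, sum_signType, Flo, hF, h0, hneg, hpos] <;> norm_num
  · rintro ⟨s, t, hs, ht, rfl⟩
    refine ⟨Matrix.of Fup *ᵥ fun v => hF v t s, ?_, ?_⟩
    · cases s <;> cases t <;> simp_all [detSite, mulVec, dotProduct, sum_signType, Fup, hF]
    · simp only [mulVec_mulVec, mul_eq_one_comm.1 fup_mul_flo, one_mulVec]

theorem nsSite_finite : nsSite.Finite :=
  (Set.finite_range fun p : SignType × SignType => fun v => hF v p.2 p.1).subset
    fun _ ⟨s, t, _, _, hw⟩ => ⟨(s, t), hw.symm⟩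

theorem apply_zero_of_mem_nsSite {w : SignType → ℝ} (hw : w ∈ nsSite) : w 0 = 1 := by
  obtain ⟨s, t, hs, -, rfl⟩ := hw
  simp [hF, Ne.symm hs]

variable {n : ℕ}

theorem bell_eq_coneHull : Bell n = coneHull (piTensor '' Set.univ.pi fun _ => detSite) :=
  congrArg coneHull <| Set.ext fun _ =>
    ⟨fun ⟨a, ha, hx⟩ => ⟨a, fun j _ => ha j, hx.symm⟩,
      fun ⟨a, ha, hx⟩ => ⟨a, fun j => ha j trivial, hx.symm⟩⟩

theorem ns_eq_dualCone : NS n = dualCone (piTensor '' Set.univ.pi fun _ => nsSite) := by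
  ext x
  simp only [NS, dualCone, Set.forall_mem_image, Set.mem_univ_pi, Set.mem_ofPred_eq, piTensor,
    mul_comm (x _)]
  constructor
  · intro h w hw
    choose s t hs ht hst using hw
    rw [funext hst]
    exact h s t hs ht
  · intro h s t hs ht
    exact h fun j => ⟨s j, t j, hs j, ht j, rfl⟩

theorem dualCone_ns : dualCone (NS n) = coneHull (piTensor '' Set.univ.pi fun _ => nsSite) := by
  rw [ns_eq_dualCone]
  refine dualCone_dualCone_eq_coneHull ((Set.Finite.pi fun _ => nsSite_finite).image _)
    (ContinuousLinearMap.proj fun _ => 0) ?_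
  rintro _ ⟨w, hw, rfl⟩
  exact (Finset.prod_eq_one fun j _ => apply_zero_of_mem_nsSite (hw j trivial) :
    ∏ j, w j 0 = 1)

theorem injective_mulVec_kroneckerPi_flo :
    Function.Injective (kroneckerPi (Fin n) (Matrix.of Flo) *ᵥ ·) :=
  Function.LeftInverse.injective (g := (kroneckerPi (Fin n) (Matrix.of Fup) *ᵥ ·)) fun x => by
    simp only [mulVec_mulVec, ← kroneckerPi_mul, fup_mul_flo, kroneckerPi_one, one_mulVec]

theorem statement7_general (n : ℕ) (x : (Fin n → SignType) → ℝ) :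
    x ∈ Bell n ↔
      (fun s : Fin n → SignType => ∑ t : Fin n → SignType, (∏ j, Flo (s j) (t j)) * x t)
        ∈ dualCone (NS n) := by
  change _ ↔ kroneckerPi (Fin n) (Matrix.of Flo) *ᵥ x ∈ _
  rw [dualCone_ns, ← image_mulVec_kroneckerPi _ image_mulVec_flo_detSite, bell_eq_coneHull,
    ← injective_mulVec_kroneckerPi_flo.mem_set_image]
  exact (Set.ext_iff.1 (coneHull_image (kroneckerPi (Fin n) (Matrix.of Flo)).mulVecLin _) _).symm

/-- `x ∈ B_n` iff lowering all indices with `F_{st}` produces an element of `(NS_n)*`. -/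
theorem statement7 (n : ℕ) (hn : 1 ≤ n) (x : (Fin n → SignType) → ℝ) :
    x ∈ Bell n ↔
      (fun s : Fin n → SignType => ∑ t : Fin n → SignType, (∏ j, Flo (s j) (t j)) * x t)
        ∈ dualCone (NS n) :=
  statement7_general n x

end
end

section
/- Extension of Bell inequalities from n to n+1 parties: let n ≥ 1 and let ι, κ be linear maps on the space of functions S^n → ℝ with ι∘ι = id, κ∘κ = id, ι∘κ = κ∘ι, ι((B_n)*) = (B_n)*, and κ((B_n)*) = (B_n)*. Let f ∈ (B_n)* satisfy ι(κ(f)) = ι(f) - κ(f) + f. Then the function f' : S^{n+1} → ℝ defined for s ∈ S^n by f'_{s,-1} = (1/2)(f - κ(f) - ι(f) + κ(ι(f)))_s, f'_{s,0} = (f + κ(f))_s, and f'_{s,+1} = (1/2)(f - κ(f) + ι(f) - κ(ι(f)))_s lies in (B_{n+1})*, i.e., it is a valid (n+1)-party Bell inequality. -/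
open Finset

noncomputable section

lemma signSum (F : SignType → ℝ) : ∑ v, F v = F 0 + F (-1) + F 1 := by
  rw [show (Finset.univ : Finset SignType) = {0, -1, 1} from by decide]
  simp [Finset.sum_insert, Finset.mem_insert, add_assoc]

lemma detPoint_mem_Bell {n : ℕ} (a : Fin n → SignType → ℝ) (ha : IsDet a) :
    (fun s => ∏ j, a j (s j)) ∈ Bell n := by
  refine ⟨1, fun _ => 1, fun _ => fun s => ∏ j, a j (s j), fun _ => zero_le_one,
    fun _ => ⟨a, ha, rfl⟩, by simp⟩

lemma dual_iff {n : ℕ} (f : (Fin n → SignType) → ℝ) : f ∈ dualCone (Bell n) ↔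
    ∀ a : Fin n → SignType → ℝ, IsDet a → 0 ≤ ∑ s, f s * ∏ j, a j (s j) := by
  constructor
  · intro hf a ha; exact hf _ (detPoint_mem_Bell a ha)
  · rintro h x ⟨m, c, v, hc, hv, rfl⟩
    have : ∑ s, f s * (∑ i, c i • v i) s = ∑ i, c i * ∑ s, f s * v i s := by
      simp only [Finset.sum_apply, Pi.smul_apply, smul_eq_mul, Finset.mul_sum]
      rw [Finset.sum_comm]
      refine Finset.sum_congr rfl fun i _ => Finset.sum_congr rfl fun s _ => by ring
    rw [this]
    refine Finset.sum_nonneg fun i _ => ?_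
    obtain ⟨a, ha, hva⟩ := hv i
    exact mul_nonneg (hc i) (by rw [hva]; exact h a ha)

/-- The snoc equivalence. -/
def snocEquiv (n : ℕ) : (Fin n → SignType) × SignType ≃ (Fin (n + 1) → SignType) where
  toFun p := Fin.snoc p.1 p.2
  invFun x := (Fin.init x, x (Fin.last n))
  left_inv := by rintro ⟨s, v⟩; simp
  right_inv := by intro x; simp [Fin.snoc_init_self]

/-- Extension of Bell inequalities from `n` to `n+1` parties using two commuting involutive
symmetries `ι` and `κ` of the cone of Bell inequalities. -/
theorem statement12 (n : ℕ) (hn : 1 ≤ n)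
    (ι κ : ((Fin n → SignType) → ℝ) →ₗ[ℝ] ((Fin n → SignType) → ℝ))
    (hι : ∀ f, ι (ι f) = f) (hκ : ∀ f, κ (κ f) = f)
    (hcomm : ∀ f, ι (κ f) = κ (ι f))
    (hιB : ι '' dualCone (Bell n) = dualCone (Bell n))
    (hκB : κ '' dualCone (Bell n) = dualCone (Bell n))
    (f : (Fin n → SignType) → ℝ) (hf : f ∈ dualCone (Bell n))
    (heig : ι (κ f) = ι f - κ f + f) :
    (fun sv : Fin (n + 1) → SignType =>
      if sv (Fin.last n) = -1 then
        (1 / 2) * (f (Fin.init sv) - κ f (Fin.init sv) - ι f (Fin.init sv) + κ (ι f) (Fin.init sv))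
      else if sv (Fin.last n) = 0 then f (Fin.init sv) + κ f (Fin.init sv)
      else
        (1 / 2) * (f (Fin.init sv) - κ f (Fin.init sv) + ι f (Fin.init sv) - κ (ι f) (Fin.init sv)))
      ∈ dualCone (Bell (n + 1)) := by
  have hκf : κ f ∈ dualCone (Bell n) := hκB ▸ ⟨f, hf, rfl⟩
  rw [dual_iff]
  intro a ha
  set f' : (Fin (n + 1) → SignType) → ℝ := fun sv =>
      if sv (Fin.last n) = -1 then
        (1 / 2) * (f (Fin.init sv) - κ f (Fin.init sv) - ι f (Fin.init sv) + κ (ι f) (Fin.init sv))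
      else if sv (Fin.last n) = 0 then f (Fin.init sv) + κ f (Fin.init sv)
      else
        (1 / 2) * (f (Fin.init sv) - κ f (Fin.init sv) + ι f (Fin.init sv) - κ (ι f) (Fin.init sv))
    with hf'
  set a' : Fin n → SignType → ℝ := fun j => a j.castSucc with ha'
  have ha'det : IsDet a' := fun j => ha j.castSucc
  set ε := a (Fin.last n) (-1) with hε
  set δ := a (Fin.last n) 1 with hδ
  have hprod : ∀ (s : Fin n → SignType) (v : SignType),
      ∏ j : Fin (n + 1), a j ((Fin.snoc s v : Fin (n+1) → SignType) j) =
        (∏ j : Fin n, a' j (s j)) * a (Fin.last n) v := by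
    intro s v
    rw [Fin.prod_univ_castSucc]
    simp [ha']
  have key : ∑ sv : Fin (n + 1) → SignType, f' sv * ∏ j, a j (sv j)
      = ∑ s : Fin n → SignType,
          ((f s + κ f s)
            + ε * ((1 / 2) * (f s - κ f s - ι f s + κ (ι f) s))
            + δ * ((1 / 2) * (f s - κ f s + ι f s - κ (ι f) s)))
          * ∏ j : Fin n, a' j (s j) := by
    rw [← Equiv.sum_comp (snocEquiv n) (fun sv => f' sv * ∏ j, a j (sv j)),
      Fintype.sum_prod_type]
    refine Finset.sum_congr rfl fun s _ => ?_
    rw [signSum]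
    have h0 : (ha (Fin.last n)).1 = (ha (Fin.last n)).1 := rfl
    simp only [snocEquiv, Equiv.coe_fn_mk, hprod, hf']
    simp only [Fin.snoc_last, Fin.init_snoc]
    norm_num [(ha (Fin.last n)).1, show ((0:SignType) = -1) ↔ False from by decide,
      show ((1:SignType) = -1) ↔ False from by decide,
      show ((1:SignType) = 0) ↔ False from by decide]
    ring
  rw [key]
  -- pointwise: the coefficient equals 2 f s or 2 κ f s
  have hD : ∀ s, κ (ι f) s = ι f s - κ f s + f s := by
    intro s
    rw [← hcomm, heig]; simp
  rcases (ha (Fin.last n)).2.1 with hε1 | hε1 <;>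
    rcases (ha (Fin.last n)).2.2 with hδ1 | hδ1
  · -- ε = -1, δ = -1 : coefficient = 2 κ f s
    have : ∀ s : Fin n → SignType,
        ((f s + κ f s) + ε * ((1 / 2) * (f s - κ f s - ι f s + κ (ι f) s))
          + δ * ((1 / 2) * (f s - κ f s + ι f s - κ (ι f) s))) = 2 * κ f s := by
      intro s; rw [← hε] at hε1; rw [← hδ] at hδ1; rw [hε1, hδ1]; ring
    calc (0:ℝ) ≤ 2 * ∑ s, κ f s * ∏ j, a' j (s j) := by
          have := (dual_iff (κ f)).1 hκf a' ha'det
          linarith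
      _ = _ := by
          rw [Finset.mul_sum]
          exact Finset.sum_congr rfl fun s _ => by rw [this s]; ring
  · -- ε = -1, δ = 1 : coefficient = 2 κ f s (uses hD)
    have : ∀ s : Fin n → SignType,
        ((f s + κ f s) + ε * ((1 / 2) * (f s - κ f s - ι f s + κ (ι f) s))
          + δ * ((1 / 2) * (f s - κ f s + ι f s - κ (ι f) s))) = 2 * κ f s := by
      intro s; rw [← hε] at hε1; rw [← hδ] at hδ1; rw [hε1, hδ1, hD s]; ring
    calc (0:ℝ) ≤ 2 * ∑ s, κ f s * ∏ j, a' j (s j) := by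
          have := (dual_iff (κ f)).1 hκf a' ha'det
          linarith
      _ = _ := by
          rw [Finset.mul_sum]
          exact Finset.sum_congr rfl fun s _ => by rw [this s]; ring
  · -- ε = 1, δ = -1 : coefficient = 2 f s (uses hD)
    have : ∀ s : Fin n → SignType,
        ((f s + κ f s) + ε * ((1 / 2) * (f s - κ f s - ι f s + κ (ι f) s))
          + δ * ((1 / 2) * (f s - κ f s + ι f s - κ (ι f) s))) = 2 * f s := by
      intro s; rw [← hε] at hε1; rw [← hδ] at hδ1; rw [hε1, hδ1, hD s]; ring
    calc (0:ℝ) ≤ 2 * ∑ s, f s * ∏ j, a' j (s j) := by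
          have := (dual_iff f).1 hf a' ha'det
          linarith
      _ = _ := by
          rw [Finset.mul_sum]
          exact Finset.sum_congr rfl fun s _ => by rw [this s]; ring
  · -- ε = 1, δ = 1 : coefficient = 2 f s
    have : ∀ s : Fin n → SignType,
        ((f s + κ f s) + ε * ((1 / 2) * (f s - κ f s - ι f s + κ (ι f) s))
          + δ * ((1 / 2) * (f s - κ f s + ι f s - κ (ι f) s))) = 2 * f s := by
      intro s; rw [← hε] at hε1; rw [← hδ] at hδ1; rw [hε1, hδ1]; ring
    calc (0:ℝ) ≤ 2 * ∑ s, f s * ∏ j, a' j (s j) := by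
          have := (dual_iff f).1 hf a' ha'det
          linarith
      _ = _ := by
          rw [Finset.mul_sum]
          exact Finset.sum_congr rfl fun s _ => by rw [this s]; ring
end
end
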